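/- arXiv:1211.0803 — 5 statements merged into one kernel-verified Lean document; each statement's English description precedes it below -/
import Mathlib

section
/- For a shift family σ on G, the inverse S_σ^{-1} of its shift operator is itself the shift operator S_τ of some shift family τ if and only if σ is the flip-flop shift family, i.e., σ_u is the identity permutation of N(u) for every u ∈ V. -/
open Matrix Complex BigOperators

section QWFramework

variable {V : Type*}

instance arcDecPred (G : SimpleGraph V) [DecidableRel G.Adj] :
    DecidablePred fun p : V × V => G.Adj p.1 p.2 :=
  fun p => inferInstanceAs (Decidable (G.Adj p.1 p.2))

instance nbrDecPred (G : SimpleGraph V) [DecidableRel G.Adj] (u : V) :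
    DecidablePred (G.Adj u) :=
  fun w => inferInstanceAs (Decidable (G.Adj u w))

/-- The symmetric arc set `D(G)` of a graph: ordered pairs of adjacent vertices. -/
abbrev Arc (G : SimpleGraph V) : Type _ := {p : V × V // G.Adj p.1 p.2}

variable [Fintype V] [DecidableEq V]

/-- The shift (permutation) operator `S_σ` of a shift family `σ`, acting on `ℂ^{D(G)}`
by `S_σ |i,j⟩ = |j, σ_j(i)⟩`. -/
noncomputable def shiftOp (G : SimpleGraph V) [DecidableRel G.Adj]
    (σ : ∀ u : V, Equiv.Perm {w : V // G.Adj u w}) :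
    Matrix (Arc G) (Arc G) ℂ :=
  fun a b => if a.1.1 = b.1.2 ∧ a.1.2 = (σ b.1.2 ⟨b.1.1, b.2.symm⟩).1 then 1 else 0

/-- The flip-flop shift family: the identity permutation at every vertex. -/
def ffFam (G : SimpleGraph V) : ∀ u : V, Equiv.Perm {w : V // G.Adj u w} :=
  fun _ => Equiv.refl _

/-- The flip-flop shift operator `S`, with `S|i,j⟩ = |j,i⟩`. -/
noncomputable def ffShift (G : SimpleGraph V) [DecidableRel G.Adj] : Matrix (Arc G) (Arc G) ℂ :=
  shiftOp G (ffFam G)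

/-- The block-diagonal coin operator `C = ⊕_u H_u`, acting by
`C|i,j⟩ = Σ_{k∈N(i)} (H_i)_{k,j} |i,k⟩`. -/
noncomputable def coinOp (G : SimpleGraph V) [DecidableRel G.Adj]
    (H : ∀ u : V, Matrix {w : V // G.Adj u w} {w : V // G.Adj u w} ℂ) :
    Matrix (Arc G) (Arc G) ℂ :=
  fun a b => if h : a.1.1 = b.1.1 then H b.1.1 ⟨a.1.2, by rw [← h]; exact a.2⟩ ⟨b.1.2, b.2⟩ else 0

/-- The G-type (Gudder type) coined quantum walk `U^G_σ[H] = C·S_σ`. -/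
noncomputable def gWalk (G : SimpleGraph V) [DecidableRel G.Adj]
    (σ : ∀ u : V, Equiv.Perm {w : V // G.Adj u w})
    (H : ∀ u : V, Matrix {w : V // G.Adj u w} {w : V // G.Adj u w} ℂ) :
    Matrix (Arc G) (Arc G) ℂ :=
  coinOp G H * shiftOp G σ

/-- The A-type (Ambainis type) coined quantum walk `U^A_σ[H] = S_σ·C`. -/
noncomputable def aWalk (G : SimpleGraph V) [DecidableRel G.Adj]
    (σ : ∀ u : V, Equiv.Perm {w : V // G.Adj u w})
    (H : ∀ u : V, Matrix {w : V // G.Adj u w} {w : V // G.Adj u w} ℂ) :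
    Matrix (Arc G) (Arc G) ℂ :=
  shiftOp G σ * coinOp G H

end QWFramework

section AuxShift

variable {V : Type*} [Fintype V] [DecidableEq V] (G : SimpleGraph V) [DecidableRel G.Adj]

/-- The arc permutation induced by a shift family. -/
def arcEquiv (σ : ∀ u : V, Equiv.Perm {w : V // G.Adj u w}) : Equiv.Perm (Arc G) where
  toFun b := ⟨(b.1.2, (σ b.1.2 ⟨b.1.1, b.2.symm⟩).1), (σ b.1.2 ⟨b.1.1, b.2.symm⟩).2⟩
  invFun a := ⟨(((σ a.1.1).symm ⟨a.1.2, a.2⟩).1, a.1.1), (((σ a.1.1).symm ⟨a.1.2, a.2⟩).2).symm⟩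
  left_inv b := by
    apply Subtype.ext
    apply Prod.ext
    · show ((σ b.1.2).symm (σ b.1.2 ⟨b.1.1, b.2.symm⟩)).1 = b.1.1
      rw [Equiv.symm_apply_apply]
    · rfl
  right_inv a := by
    apply Subtype.ext
    apply Prod.ext
    · rfl
    · show (σ a.1.1 ((σ a.1.1).symm ⟨a.1.2, a.2⟩)).1 = a.1.2
      rw [Equiv.apply_symm_apply]

lemma shiftOp_eq_arcEquiv (σ : ∀ u : V, Equiv.Perm {w : V // G.Adj u w}) (a b : Arc G) :
    shiftOp G σ a b = if a = arcEquiv G σ b then 1 else 0 := by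
  unfold shiftOp
  congr 1
  simp only [eq_iff_iff]
  constructor
  · rintro ⟨h1, h2⟩
    apply Subtype.ext
    apply Prod.ext <;> assumption
  · rintro rfl
    exact ⟨rfl, rfl⟩

lemma shiftOp_mul_apply (σ τ : ∀ u : V, Equiv.Perm {w : V // G.Adj u w}) (a b : Arc G) :
    (shiftOp G σ * shiftOp G τ) a b =
      if a = arcEquiv G σ (arcEquiv G τ b) then 1 else 0 := by
  rw [Matrix.mul_apply]
  simp only [shiftOp_eq_arcEquiv]
  simp only [mul_ite, mul_one, mul_zero, Finset.sum_ite_eq', Finset.mem_univ, if_true]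

lemma shiftOp_mul_transpose (σ : ∀ u : V, Equiv.Perm {w : V // G.Adj u w}) :
    shiftOp G σ * (shiftOp G σ)ᵀ = 1 := by
  ext a b
  rw [Matrix.mul_apply, Matrix.one_apply]
  simp only [Matrix.transpose_apply, shiftOp_eq_arcEquiv]
  rw [Finset.sum_eq_single ((arcEquiv G σ).symm a)]
  · rw [Equiv.apply_symm_apply]
    by_cases h : a = b
    · simp [h]
    · simp [h, Ne.symm h]
  · intro c _ hc
    have h : ¬ (a = arcEquiv G σ c) := by
      intro h
      exact hc (by rw [h, Equiv.symm_apply_apply])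
    simp [h]
  · simp

lemma shiftOp_isUnit_det (σ : ∀ u : V, Equiv.Perm {w : V // G.Adj u w}) :
    IsUnit (shiftOp G σ).det :=
  Matrix.isUnit_det_of_right_inverse (shiftOp_mul_transpose G σ)

end AuxShift

/-- `S_σ⁻¹` is itself a shift operator `S_τ` of some shift family `τ`
if and only if `σ` is the flip-flop shift family (the identity at every vertex). -/
theorem shiftOp_inv_is_shiftOp_iff_flipflop {V : Type*} [Fintype V] [DecidableEq V]
    (G : SimpleGraph V) [DecidableRel G.Adj] (hG : G.Connected)
    (σ : ∀ u : V, Equiv.Perm {w : V // G.Adj u w}) :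
    (∃ τ : ∀ u : V, Equiv.Perm {w : V // G.Adj u w}, (shiftOp G σ)⁻¹ = shiftOp G τ) ↔
      ∀ u : V, σ u = Equiv.refl {w : V // G.Adj u w} := by
  constructor
  · rintro ⟨τ, hτ⟩ u
    have h1 : shiftOp G σ * shiftOp G τ = 1 := by
      rw [← hτ]
      exact Matrix.mul_nonsing_inv _ (shiftOp_isUnit_det G σ)
    have key : ∀ b : Arc G, arcEquiv G σ (arcEquiv G τ b) = b := by
      intro b
      by_contra h
      have h2 := congrFun (congrFun h1 (arcEquiv G σ (arcEquiv G τ b))) b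
      rw [shiftOp_mul_apply] at h2
      simp only [if_pos rfl, Matrix.one_apply, if_neg h] at h2
      exact one_ne_zero h2
    have hPτ : ∀ b : Arc G, arcEquiv G τ b = (arcEquiv G σ).symm b := by
      intro b
      apply (arcEquiv G σ).injective
      rw [key b, Equiv.apply_symm_apply]
    have key2 : ∀ b : Arc G, arcEquiv G τ (arcEquiv G σ b) = b := by
      intro b
      rw [hPτ, Equiv.symm_apply_apply]
    apply Equiv.ext
    intro w
    have hb := key2 ⟨(w.1, u), w.2.symm⟩
    have h3 := congrArg (fun x : Arc G => x.1.1) hb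
    apply Subtype.ext
    exact h3
  · intro hσ
    have hff : σ = ffFam G := funext hσ
    subst hff
    refine ⟨ffFam G, Matrix.inv_eq_right_inv ?_⟩
    ext a b
    have : arcEquiv G (ffFam G) (arcEquiv G (ffFam G) b) = b := Subtype.ext rfl
    rw [shiftOp_mul_apply, this, Matrix.one_apply]
end

section
/- Every G-type quantum walk can be expressed through an A-type quantum walk with flip-flop shift: for every shift family σ and every coin H = (H_j)_{j∈V}, letting P^{(j)} be the permutation matrix on ℂ^{N(j)} representing σ_j (sending e_i to e_{σ_j(i)}) and H̃_j = H_j P^{(j)}, one has U^G_σ[H_j : j∈V] = (U^A_{ff}[H̃_j† : j∈V])†. -/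
open Matrix Complex BigOperators

/-- The permutation matrix of a permutation `π`, sending the basis vector `e_b` to `e_{π b}`. -/
noncomputable def permMat {α : Type*} [Fintype α] [DecidableEq α] (π : Equiv.Perm α) :
    Matrix α α ℂ :=
  fun a b => if a = π b then 1 else 0

/-! The flip-flop shift only swaps the two ends of an arc, so the general shift `S_σ` is the
flip-flop shift followed by the coin `⊕_j P^{(j)}` that permutes the arcs leaving each vertex:
`S_σ = (⊕_j P^{(j)}) · S`. Block-diagonal coins multiply blockwise, hence
`C · S_σ = (⊕_j H_j P^{(j)}) · S`, and since `S` is self-adjoint this is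
`(S · (⊕_j H̃_j)†)† = (U^A_ff[H̃†])†`. -/

section CoinAndShift

variable {V : Type*} [DecidableEq V] (G : SimpleGraph V) [DecidableRel G.Adj]

theorem coinOp_apply_same_tail
    (H : ∀ u : V, Matrix {w : V // G.Adj u w} {w : V // G.Adj u w} ℂ)
    {u v w : V} (hv : G.Adj u v) (hw : G.Adj u w) :
    coinOp G H ⟨(u, v), hv⟩ ⟨(u, w), hw⟩ = H u ⟨v, hv⟩ ⟨w, hw⟩ :=
  dif_pos rfl

theorem coinOp_apply_of_tail_ne
    (H : ∀ u : V, Matrix {w : V // G.Adj u w} {w : V // G.Adj u w} ℂ)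
    {a b : Arc G} (h : a.1.1 ≠ b.1.1) : coinOp G H a b = 0 :=
  dif_neg h

theorem coinOp_mul [Fintype V] (A B : ∀ u : V, Matrix {w : V // G.Adj u w} {w : V // G.Adj u w} ℂ) :
    coinOp G A * coinOp G B = coinOp G fun u => A u * B u := by
  ext ⟨⟨i, j⟩, hij⟩ ⟨⟨k, l⟩, hkl⟩
  rw [Matrix.mul_apply]
  by_cases hik : i = k
  · subst hik
    rw [coinOp_apply_same_tail, Matrix.mul_apply]
    refine (Fintype.sum_of_injective (fun w : {w : V // G.Adj i w} => (⟨(i, w), w.2⟩ : Arc G))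
      (fun v w h => Subtype.ext (congrArg (fun c : Arc G => c.1.2) h)) _ _ ?_ ?_).symm
    · rintro ⟨⟨m, w⟩, hmw⟩ hc
      refine mul_eq_zero_of_right _ (coinOp_apply_of_tail_ne G B fun him => hc ?_)
      subst him
      exact ⟨⟨w, hmw⟩, rfl⟩
    · intro w
      rw [coinOp_apply_same_tail, coinOp_apply_same_tail]
  · rw [coinOp_apply_of_tail_ne G _ hik]
    refine Finset.sum_eq_zero fun c _ => ?_
    by_cases hc : c.1.1 = k
    · exact mul_eq_zero_of_left (coinOp_apply_of_tail_ne G A (hc ▸ hik)) _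
    · exact mul_eq_zero_of_right _ (coinOp_apply_of_tail_ne G B hc)

theorem conjTranspose_coinOp
    (H : ∀ u : V, Matrix {w : V // G.Adj u w} {w : V // G.Adj u w} ℂ) :
    (coinOp G H)ᴴ = coinOp G fun u => (H u)ᴴ := by
  ext ⟨⟨i, j⟩, hij⟩ ⟨⟨k, l⟩, hkl⟩
  rw [conjTranspose_apply]
  by_cases hik : i = k
  · subst hik
    rw [coinOp_apply_same_tail, coinOp_apply_same_tail, conjTranspose_apply]
  · rw [coinOp_apply_of_tail_ne G _ (Ne.symm hik), coinOp_apply_of_tail_ne G _ hik, star_zero]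

theorem conjTranspose_ffShift : (ffShift G)ᴴ = ffShift G := by
  ext a b
  simp [ffShift, shiftOp, ffFam, conjTranspose_apply, apply_ite, eq_comm, and_comm]

theorem mul_ffShift_apply [Fintype V] (M : Matrix (Arc G) (Arc G) ℂ) (a : Arc G) {k l : V}
    (hkl : G.Adj k l) : (M * ffShift G) a ⟨(k, l), hkl⟩ = M a ⟨(l, k), hkl.symm⟩ := by
  rw [Matrix.mul_apply, Finset.sum_eq_single ⟨(l, k), hkl.symm⟩]
  · simp [ffShift, shiftOp, ffFam]
  · rintro c - hc
    refine mul_eq_zero_of_right _ (if_neg ?_)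
    rintro ⟨h1, h2⟩
    exact hc (Subtype.ext (Prod.ext h1 h2))
  · simp

theorem coinOp_permMat_mul_ffShift [Fintype V] (σ : ∀ u : V, Equiv.Perm {w : V // G.Adj u w}) :
    coinOp G (fun u => permMat (σ u)) * ffShift G = shiftOp G σ := by
  ext a ⟨⟨k, l⟩, hkl⟩
  rw [mul_ffShift_apply]
  obtain ⟨⟨i, j⟩, hij⟩ := a
  by_cases hil : i = l
  · subst hil
    rw [coinOp_apply_same_tail]
    simp [shiftOp, permMat, Subtype.ext_iff]
  · rw [coinOp_apply_of_tail_ne G _ hil]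
    simp [shiftOp, hil]

end CoinAndShift

theorem gWalk_eq_dagger_aWalk_ff_general {V : Type*} [Fintype V] [DecidableEq V]
    (G : SimpleGraph V) [DecidableRel G.Adj]
    (σ : ∀ u : V, Equiv.Perm {w : V // G.Adj u w})
    (H : ∀ u : V, Matrix {w : V // G.Adj u w} {w : V // G.Adj u w} ℂ) :
    gWalk G σ H = (aWalk G (ffFam G) (fun j => (H j * permMat (σ j))ᴴ))ᴴ := by
  calc gWalk G σ H = coinOp G H * (coinOp G (fun u => permMat (σ u)) * ffShift G) := by
        rw [gWalk, coinOp_permMat_mul_ffShift]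
    _ = coinOp G (fun u => H u * permMat (σ u)) * ffShift G := by
        rw [← mul_assoc, coinOp_mul]
    _ = (ffShift G * coinOp G fun u => (H u * permMat (σ u))ᴴ)ᴴ := by
        rw [conjTranspose_mul, conjTranspose_coinOp, conjTranspose_ffShift]
        simp only [conjTranspose_conjTranspose]

/-- Every G-type QW is expressed by an A-type QW with flip-flop shift:
with `P^{(j)}` the permutation matrix of `σ_j` and `H̃_j = H_j·P^{(j)}`,
`U^G_σ[H] = (U^A_ff[H̃†])†`. -/
theorem gWalk_eq_dagger_aWalk_ff {V : Type*} [Fintype V] [DecidableEq V]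
    (G : SimpleGraph V) [DecidableRel G.Adj] (hG : G.Connected)
    (σ : ∀ u : V, Equiv.Perm {w : V // G.Adj u w})
    (H : ∀ u : V, Matrix {w : V // G.Adj u w} {w : V // G.Adj u w} ℂ)
    (hH : ∀ u : V, H u ∈ Matrix.unitaryGroup {w : V // G.Adj u w} ℂ) :
    gWalk G σ H = (aWalk G (ffFam G) (fun j => (H j * permMat (σ j))ᴴ))ᴴ :=
  gWalk_eq_dagger_aWalk_ff_general G σ H
end

section
/- (Severini) Every time evolution of a coined quantum walk on G is a weighted adjacency matrix of the line digraph of G, or permutation-isomorphic to a transposed one. Precisely: (a) for every shift family σ and coin H, the matrix entry ⟨(l,m)| U^G_σ[H] |(i,j)⟩ vanishes unless l = j (so U^G_σ[H] is supported on the adjacency relation of the line digraph, whose vertices are D(G) and whose arcs are the pairs ((i,j),(j,m))); (b) for every coin H, the entry ⟨(l,m)| U^A_{ff}[H] |(i,j)⟩ vanishes unless m = i (the transposed adjacency pattern); and (c) for every shift family σ and coin H, S_σ† · U^A_σ[H] · S_σ = U^G_σ[H], so every A-type walk is isomorphic via the permutation matrix S_σ to a matrix supported on the adjacency relation of the line digraph.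 -/
open Matrix Complex BigOperators

section Aux

variable {V : Type*} [Fintype V] [DecidableEq V]

/-- The arc permutation underlying the shift operator. -/
def shiftEquiv (G : SimpleGraph V) [DecidableRel G.Adj]
    (σ : ∀ u : V, Equiv.Perm {w : V // G.Adj u w}) : Arc G ≃ Arc G where
  toFun b := ⟨(b.1.2, (σ b.1.2 ⟨b.1.1, b.2.symm⟩).1), (σ b.1.2 ⟨b.1.1, b.2.symm⟩).2⟩
  invFun a := ⟨(((σ a.1.1).symm ⟨a.1.2, a.2⟩).1, a.1.1), (((σ a.1.1).symm ⟨a.1.2, a.2⟩).2).symm⟩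
  left_inv b := by
    apply Subtype.ext
    apply Prod.ext <;> simp
  right_inv a := by
    apply Subtype.ext
    apply Prod.ext <;> simp

omit [Fintype V] in
lemma shiftOp_eq (G : SimpleGraph V) [DecidableRel G.Adj]
    (σ : ∀ u : V, Equiv.Perm {w : V // G.Adj u w}) (a b : Arc G) :
    shiftOp G σ a b = if a = shiftEquiv G σ b then 1 else 0 := by
  unfold shiftOp shiftEquiv
  congr 1
  simp only [eq_iff_iff]
  constructor
  · rintro ⟨h1, h2⟩
    apply Subtype.ext
    exact Prod.ext h1 h2
  · rintro rfl
    exact ⟨rfl, rfl⟩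

lemma shift_unitary (G : SimpleGraph V) [DecidableRel G.Adj]
    (σ : ∀ u : V, Equiv.Perm {w : V // G.Adj u w}) :
    (shiftOp G σ)ᴴ * shiftOp G σ = 1 := by
  ext a b
  simp only [Matrix.mul_apply, Matrix.conjTranspose_apply, shiftOp_eq, Matrix.one_apply]
  simp [apply_ite (star : ℂ → ℂ), ite_and, Finset.sum_ite_eq,
    (shiftEquiv G σ).injective.eq_iff, eq_comm]

end Aux

/-- Severini: (a) `U^G_σ[H]` is supported on the adjacency relation of the line
digraph of `G` (entries `⟨(l,m)|U|(i,j)⟩` vanish unless `l = j`); (b) `U^A_ff[H]` has the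
transposed adjacency pattern (entries vanish unless `m = i`); (c) `S_σ†·U^A_σ[H]·S_σ = U^G_σ[H]`,
so every A-type walk is permutation-isomorphic to a matrix supported on the line digraph. -/
theorem severini_line_digraph {V : Type*} [Fintype V] [DecidableEq V]
    (G : SimpleGraph V) [DecidableRel G.Adj] (hG : G.Connected)
    (σ : ∀ u : V, Equiv.Perm {w : V // G.Adj u w})
    (H : ∀ u : V, Matrix {w : V // G.Adj u w} {w : V // G.Adj u w} ℂ)
    (hH : ∀ u : V, H u ∈ Matrix.unitaryGroup {w : V // G.Adj u w} ℂ) :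
    (∀ a b : Arc G, a.1.1 ≠ b.1.2 → gWalk G σ H a b = 0) ∧
    (∀ a b : Arc G, a.1.2 ≠ b.1.1 → aWalk G (ffFam G) H a b = 0) ∧
    (shiftOp G σ)ᴴ * aWalk G σ H * shiftOp G σ = gWalk G σ H := by
  refine ⟨?_, ?_, ?_⟩
  · intro a b h
    rw [gWalk, Matrix.mul_apply]
    apply Finset.sum_eq_zero
    intro c _
    by_cases h1 : c.1.1 = b.1.2
    · have h2 : a.1.1 ≠ c.1.1 := fun he => h (he.trans h1)
      rw [coinOp, dif_neg h2, zero_mul]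
    · rw [shiftOp, if_neg (fun hc => h1 hc.1), mul_zero]
  · intro a b h
    rw [aWalk, Matrix.mul_apply]
    apply Finset.sum_eq_zero
    intro c _
    by_cases h1 : a.1.2 = c.1.1
    · have h2 : c.1.1 ≠ b.1.1 := fun he => h (h1.trans he)
      rw [coinOp, dif_neg h2, mul_zero]
    · rw [shiftOp, if_neg, zero_mul]
      rintro ⟨-, h2⟩
      exact h1 (h2.trans rfl)
  · rw [aWalk, gWalk, ← Matrix.mul_assoc, shift_unitary, Matrix.one_mul]
end

section
/- (Eigenvector part of the Szegedy spectral theorem) Suppose 𝔭 ∈ ℂ^V and ν ∈ ℝ satisfy J𝔭 = ν𝔭, and θ ∈ ℝ satisfies cos θ = ν. Then the vector v = (I − e^{iθ}S)·A𝔭 ∈ ℂ^{D(G)} satisfies U^{(P)} v = e^{iθ} v, where S is the flip-flop shift. (Replacing θ by −θ yields U^{(P)}(I − e^{−iθ}S)A𝔭 = e^{−iθ}(I − e^{−iθ}S)A𝔭.) -/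
open Matrix Complex BigOperators

/-- The Szegedy local coin at vertex `j`: `(H_j)_{m,l} = 2√(p_{j,l}p_{j,m}) − δ_{l,m}`. -/
noncomputable def szCoin {V : Type*} [Fintype V] [DecidableEq V]
    (G : SimpleGraph V) [DecidableRel G.Adj] (p : V → V → ℝ) (j : V) :
    Matrix {w : V // G.Adj j w} {w : V // G.Adj j w} ℂ :=
  fun m l => ((2 * Real.sqrt (p j l.1 * p j m.1) : ℝ) : ℂ) - if l = m then 1 else 0

/-- The Szegedy walk `U^{(P)} = S·C`: the A-type walk with flip-flop shift and Szegedy coins. -/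
noncomputable def szWalk {V : Type*} [Fintype V] [DecidableEq V]
    (G : SimpleGraph V) [DecidableRel G.Adj] (p : V → V → ℝ) :
    Matrix (Arc G) (Arc G) ℂ :=
  ffShift G * coinOp G (szCoin G p)

/-- The map `A : ℂ^V → ℂ^{D(G)}`, `A|j⟩ = Σ_{l∈N(j)} √(p_{j,l}) |j,l⟩`, as a matrix. -/
noncomputable def szA {V : Type*} [Fintype V] [DecidableEq V]
    (G : SimpleGraph V) [DecidableRel G.Adj] (p : V → V → ℝ) :
    Matrix (Arc G) V ℂ :=
  fun a i => if a.1.1 = i then ((Real.sqrt (p a.1.1 a.1.2) : ℝ) : ℂ) else 0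

/-- The `|V|×|V|` matrix `J` with `(J)_{u,v} = √(p_{u,v} p_{v,u})` on arcs and `0` otherwise. -/
noncomputable def szJ {V : Type*} [Fintype V] [DecidableEq V]
    (G : SimpleGraph V) [DecidableRel G.Adj] (p : V → V → ℝ) :
    Matrix V V ℂ :=
  fun u v => if G.Adj u v then ((Real.sqrt (p u v * p v u) : ℝ) : ℂ) else 0


section SzHelpers

variable {V : Type*} [Fintype V] [DecidableEq V] (G : SimpleGraph V) [DecidableRel G.Adj]

/-- Arc reversal. -/
def arcRev (a : Arc G) : Arc G := ⟨(a.1.2, a.1.1), a.2.symm⟩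

lemma arcRev_arcRev (a : Arc G) : arcRev G (arcRev G a) = a := rfl

lemma ffShift_apply (a b : Arc G) : ffShift G a b = if b = arcRev G a then 1 else 0 := by
  unfold ffShift shiftOp ffFam
  simp only [Equiv.refl_apply]
  congr 1
  apply propext
  constructor
  · rintro ⟨h1, h2⟩
    apply Subtype.ext
    apply Prod.ext
    · exact h2.symm
    · exact h1.symm
  · rintro rfl
    exact ⟨rfl, rfl⟩

lemma ffShift_mulVec (x : Arc G → ℂ) (a : Arc G) :
    (ffShift G).mulVec x a = x (arcRev G a) := by
  unfold Matrix.mulVec dotProduct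
  have : ∀ b : Arc G, ffShift G a b * x b = if arcRev G a = b then x b else 0 := by
    intro b
    rw [ffShift_apply]
    by_cases h : b = arcRev G a
    · simp [h]
    · rw [if_neg h, zero_mul, if_neg (fun hh : arcRev G a = b => h hh.symm)]
  simp only [this]
  rw [Finset.sum_ite_eq]
  simp

lemma arc_sum (f : Arc G → ℂ) :
    ∑ b : Arc G, f b = ∑ u : V, ∑ w : V, if h : G.Adj u w then f ⟨(u, w), h⟩ else 0 := by
  classical
  have h1 : ∑ q ∈ Finset.univ.filter (fun q : V × V => G.Adj q.1 q.2),
        (if h : G.Adj q.1 q.2 then f ⟨q, h⟩ else 0) = ∑ b : Arc G, f b := by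
    rw [Finset.sum_subtype (p := fun q : V × V => G.Adj q.1 q.2)
      (Finset.univ.filter (fun q : V × V => G.Adj q.1 q.2))
      (by simp) (fun q => if h : G.Adj q.1 q.2 then f ⟨q, h⟩ else 0)]
    apply Finset.sum_congr rfl
    intro b _
    rw [dif_pos b.2]
  rw [← h1, Finset.sum_filter, Fintype.sum_prod_type]
  apply Finset.sum_congr rfl
  intro u _
  apply Finset.sum_congr rfl
  intro w _
  by_cases h : G.Adj u w <;> simp [h]

lemma coin_mulVec (p : V → V → ℝ) (x : Arc G → ℂ) (a : Arc G) :
    (coinOp G (szCoin G p)).mulVec x a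
      = ∑ w : V, if h : G.Adj a.1.1 w
          then szCoin G p a.1.1 ⟨a.1.2, a.2⟩ ⟨w, h⟩ * x ⟨(a.1.1, w), h⟩ else 0 := by
  unfold Matrix.mulVec dotProduct
  rw [arc_sum G (fun b => coinOp G (szCoin G p) a b * x b)]
  rw [Finset.sum_eq_single a.1.1]
  · apply Finset.sum_congr rfl
    intro w _
    by_cases h : G.Adj a.1.1 w
    · rw [dif_pos h, dif_pos h]
      congr 1
      unfold coinOp
      rw [dif_pos rfl]
    · rw [dif_neg h, dif_neg h]
  · intro u _ hu
    apply Finset.sum_eq_zero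
    intro w _
    by_cases h : G.Adj u w
    · rw [dif_pos h]
      have : coinOp G (szCoin G p) a ⟨(u, w), h⟩ = 0 := by
        unfold coinOp
        rw [dif_neg (fun hh => hu hh.symm)]
      rw [this, zero_mul]
    · rw [dif_neg h]
  · simp

lemma szA_mulVec (p : V → V → ℝ) (𝔭 : V → ℂ) (a : Arc G) :
    (szA G p).mulVec 𝔭 a = ((Real.sqrt (p a.1.1 a.1.2) : ℝ) : ℂ) * 𝔭 a.1.1 := by
  unfold Matrix.mulVec dotProduct szA
  simp only [ite_mul, zero_mul]
  rw [Finset.sum_ite_eq]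
  simp

lemma sum_adj_eq_neighbor (i : V) (F : V → ℂ) :
    (∑ w : V, if G.Adj i w then F w else 0) = ∑ w ∈ G.neighborFinset i, F w := by
  rw [SimpleGraph.neighborFinset_eq_filter, Finset.sum_filter]

end SzHelpers

section SzKey

variable {V : Type*} [Fintype V] [DecidableEq V] (G : SimpleGraph V) [DecidableRel G.Adj]
  (p : V → V → ℝ) (hp0 : ∀ u v, 0 ≤ p u v) (hpadj : ∀ u v, ¬ G.Adj u v → p u v = 0)
  (hpsum : ∀ u : V, ∑ w ∈ G.neighborFinset u, p u w = 1)

include hp0 hpsum in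
lemma coin_fix (𝔭 : V → ℂ) :
    (coinOp G (szCoin G p)).mulVec ((szA G p).mulVec 𝔭) = (szA G p).mulVec 𝔭 := by
  funext a
  obtain ⟨⟨i, j⟩, hij⟩ := a
  rw [coin_mulVec, szA_mulVec]
  simp only
  have key : ∀ w : V,
      (if h : G.Adj i w then szCoin G p i ⟨j, hij⟩ ⟨w, h⟩ *
          ((szA G p).mulVec 𝔭 ⟨(i, w), h⟩) else 0)
      = (if G.Adj i w then ((2 * p i w : ℝ) : ℂ) * ((Real.sqrt (p i j) : ℝ) : ℂ) * 𝔭 i else 0)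
        - (if w = j then ((Real.sqrt (p i j) : ℝ) : ℂ) * 𝔭 i else 0) := by
    intro w
    by_cases h : G.Adj i w
    · rw [dif_pos h, if_pos h, szA_mulVec]
      simp only [szCoin]
      have hsub : (⟨w, h⟩ : {w : V // G.Adj i w}) = ⟨j, hij⟩ ↔ w = j := by
        constructor
        · intro hh; exact congrArg Subtype.val hh
        · intro hh; exact Subtype.ext hh
      have hs : Real.sqrt (p i w * p i j) * Real.sqrt (p i w)
          = p i w * Real.sqrt (p i j) := by
        rw [Real.sqrt_mul (hp0 i w)]
        rw [mul_comm (Real.sqrt (p i w)) (Real.sqrt (p i j)), mul_assoc,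
          Real.mul_self_sqrt (hp0 i w)]
        ring
      have hs' : ((Real.sqrt (p i w * p i j) : ℝ) : ℂ) * ((Real.sqrt (p i w) : ℝ) : ℂ)
          = ((p i w : ℝ) : ℂ) * ((Real.sqrt (p i j) : ℝ) : ℂ) := by
        rw [← Complex.ofReal_mul, ← Complex.ofReal_mul, hs]
      by_cases hwj : w = j
      · subst hwj
        rw [if_pos (hsub.mpr rfl), if_pos rfl]
        simp only [Complex.ofReal_mul, Complex.ofReal_ofNat]
        linear_combination 2 * 𝔭 i * hs'
      · rw [if_neg (fun hh => hwj (hsub.mp hh)), if_neg hwj]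
        simp only [Complex.ofReal_mul, Complex.ofReal_ofNat]
        linear_combination 2 * 𝔭 i * hs'
    · rw [dif_neg h, if_neg h, if_neg (by rintro rfl; exact h hij)]
      simp
  simp only [key]
  rw [Finset.sum_sub_distrib]
  have h2 : (∑ w : V, if w = j then ((Real.sqrt (p i j) : ℝ) : ℂ) * 𝔭 i else 0)
      = ((Real.sqrt (p i j) : ℝ) : ℂ) * 𝔭 i := by
    rw [Finset.sum_ite_eq']; simp
  have h1 : (∑ w : V, if G.Adj i w then ((2 * p i w : ℝ) : ℂ) * ((Real.sqrt (p i j) : ℝ) : ℂ) * 𝔭 i else 0)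
      = 2 * (((Real.sqrt (p i j) : ℝ) : ℂ) * 𝔭 i) := by
    rw [sum_adj_eq_neighbor]
    rw [← Finset.sum_mul, ← Finset.sum_mul]
    have : (∑ w ∈ G.neighborFinset i, ((2 * p i w : ℝ) : ℂ))
        = 2 := by
      push_cast
      rw [← Finset.mul_sum, ← Complex.ofReal_sum, hpsum i]
      norm_num
    rw [this]
    ring
  rw [h1, h2]
  ring

include hp0 hpadj in
lemma coin_shift (𝔭 : V → ℂ) (ν : ℝ)
    (heig : (szJ G p).mulVec 𝔭 = (ν : ℂ) • 𝔭) :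
    (coinOp G (szCoin G p)).mulVec ((ffShift G).mulVec ((szA G p).mulVec 𝔭))
      = ((2 * ν : ℝ) : ℂ) • (szA G p).mulVec 𝔭 - (ffShift G).mulVec ((szA G p).mulVec 𝔭) := by
  funext a
  obtain ⟨⟨i, j⟩, hij⟩ := a
  rw [coin_mulVec]
  have hJ : ∑ w : V, ((Real.sqrt (p i w * p w i) : ℝ) : ℂ) * 𝔭 w = (ν : ℂ) * 𝔭 i := by
    have := congrFun heig i
    rw [Pi.smul_apply, smul_eq_mul] at this
    rw [← this]
    unfold Matrix.mulVec dotProduct szJ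
    apply Finset.sum_congr rfl
    intro w _
    by_cases h : G.Adj i w
    · simp [h]
    · simp [h, hpadj i w h]
  have key : ∀ w : V,
      (if h : G.Adj i w then szCoin G p i ⟨j, hij⟩ ⟨w, h⟩ *
          ((ffShift G).mulVec ((szA G p).mulVec 𝔭) ⟨(i, w), h⟩) else 0)
      = 2 * ((Real.sqrt (p i j) : ℝ) : ℂ) * (((Real.sqrt (p i w * p w i) : ℝ) : ℂ) * 𝔭 w)
        - (if w = j then ((Real.sqrt (p j i) : ℝ) : ℂ) * 𝔭 j else 0) := by
    intro w
    by_cases h : G.Adj i w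
    · rw [dif_pos h, ffShift_mulVec, szA_mulVec]
      simp only [szCoin, arcRev]
      have hsub : (⟨w, h⟩ : {w : V // G.Adj i w}) = ⟨j, hij⟩ ↔ w = j := by
        constructor
        · intro hh; exact congrArg Subtype.val hh
        · intro hh; exact Subtype.ext hh
      have hs : Real.sqrt (p i w * p i j) * Real.sqrt (p w i)
          = Real.sqrt (p i j) * Real.sqrt (p i w * p w i) := by
        rw [Real.sqrt_mul (hp0 i w), Real.sqrt_mul (hp0 i w)]
        ring
      have hs'' : ((Real.sqrt (p i w * p i j) : ℝ) : ℂ) * ((Real.sqrt (p w i) : ℝ) : ℂ)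
          = ((Real.sqrt (p i j) : ℝ) : ℂ) * ((Real.sqrt (p i w * p w i) : ℝ) : ℂ) := by
        rw [← Complex.ofReal_mul, ← Complex.ofReal_mul, hs]
      by_cases hwj : w = j
      · subst hwj
        rw [if_pos (hsub.mpr rfl), if_pos rfl]
        simp only [Complex.ofReal_mul, Complex.ofReal_ofNat]
        linear_combination 2 * 𝔭 w * hs''
      · rw [if_neg (fun hh => hwj (hsub.mp hh)), if_neg hwj]
        simp only [Complex.ofReal_mul, Complex.ofReal_ofNat]
        linear_combination 2 * 𝔭 w * hs''
    · rw [dif_neg h, if_neg (by rintro rfl; exact h hij)]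
      rw [hpadj i w h, zero_mul, Real.sqrt_zero]
      simp
  simp only [key]
  rw [Finset.sum_sub_distrib, ← Finset.mul_sum, hJ]
  have h2 : (∑ w : V, if w = j then ((Real.sqrt (p j i) : ℝ) : ℂ) * 𝔭 j else 0)
      = ((Real.sqrt (p j i) : ℝ) : ℂ) * 𝔭 j := by
    rw [Finset.sum_ite_eq']; simp
  rw [h2]
  rw [Pi.sub_apply, Pi.smul_apply, smul_eq_mul, ffShift_mulVec, szA_mulVec, szA_mulVec]
  simp only [arcRev]
  push_cast
  ring

end SzKey

/-- eigenvector part of the Szegedy spectral theorem: if `J𝔭 = ν𝔭` with `ν ∈ ℝ`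
and `cos θ = ν`, then `v = (I − e^{iθ}S)·A𝔭` satisfies `U^{(P)} v = e^{iθ} v`. -/
theorem szWalk_eigenvector {V : Type*} [Fintype V] [DecidableEq V]
    (G : SimpleGraph V) [DecidableRel G.Adj] (hG : G.Connected)
    (p : V → V → ℝ) (hp0 : ∀ u v, 0 ≤ p u v) (hpadj : ∀ u v, ¬ G.Adj u v → p u v = 0)
    (hpsum : ∀ u : V, ∑ w ∈ G.neighborFinset u, p u w = 1)
    (𝔭 : V → ℂ) (ν θ : ℝ)
    (heig : (szJ G p).mulVec 𝔭 = (ν : ℂ) • 𝔭) (hθ : Real.cos θ = ν) :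
    (szWalk G p).mulVec
        ((szA G p).mulVec 𝔭 -
          Complex.exp (θ * Complex.I) • (ffShift G).mulVec ((szA G p).mulVec 𝔭)) =
      Complex.exp (θ * Complex.I) •
        ((szA G p).mulVec 𝔭 -
          Complex.exp (θ * Complex.I) • (ffShift G).mulVec ((szA G p).mulVec 𝔭)) := by
  have e0 : Complex.exp (θ * Complex.I) * Complex.exp (-(θ * Complex.I)) = 1 := by
    rw [← Complex.exp_add, add_neg_cancel, Complex.exp_zero]
  have hν : (ν : ℂ) = (Complex.exp (θ * Complex.I) + Complex.exp (-(θ * Complex.I))) / 2 := by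
    rw [← hθ, Complex.ofReal_cos, Complex.cos]
    ring_nf
  rw [szWalk, ← Matrix.mulVec_mulVec, Matrix.mulVec_sub, Matrix.mulVec_smul,
    coin_fix G p hp0 hpsum 𝔭, coin_shift G p hp0 hpadj 𝔭 ν heig]
  funext a
  simp only [Pi.sub_apply, Pi.smul_apply, smul_eq_mul, ffShift_mulVec,
    Matrix.mulVec_sub, Matrix.mulVec_smul, arcRev_arcRev]
  push_cast
  set e := Complex.exp (θ * Complex.I)
  set f := Complex.exp (-(θ * Complex.I))
  set X := (szA G p).mulVec 𝔭 (arcRev G a)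
  set Y := (szA G p).mulVec 𝔭 a
  linear_combination (-2 * e * X) * hν + (-X) * e0
end

section
/- Let N be a finite nonempty index set with d = |N|, let k be a nonzero real and λ ≥ 0 a real, and let (a_j)_{j∈N}, (b_j)_{j∈N} be complex numbers. Then the following are equivalent: (i) there exists φ ∈ ℂ such that a_j + b_j = φ for every j ∈ N and −ik·Σ_{j∈N}(a_j − b_j) = λφ; (ii) for every j ∈ N, a_j = Σ_{l∈N} (2/(d − iλ/k) − δ_{l,j})·b_l. -/
open Complex BigOperators

/-- boundary conditions at a vertex in coefficient form: for a finite nonempty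
index set `N` with `d = |N|`, `k ≠ 0` real, `λ ≥ 0` real, and complex numbers `(a_j), (b_j)`,
the continuity and current-conservation conditions
`∃ φ, (∀ j, a_j + b_j = φ) ∧ −ik·Σ_j (a_j − b_j) = λφ` are equivalent to
`∀ j, a_j = Σ_l (2/(d − iλ/k) − δ_{l,j})·b_l`. -/
theorem vertex_boundary_conditions_iff {N : Type*} [Fintype N] [Nonempty N] [DecidableEq N]
    (k : ℝ) (hk : k ≠ 0) (lam : ℝ) (hlam : 0 ≤ lam) (a b : N → ℂ) :
    (∃ φ : ℂ, (∀ j, a j + b j = φ) ∧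
        -Complex.I * (k : ℂ) * (∑ j, (a j - b j)) = (lam : ℂ) * φ) ↔
      (∀ j, a j = ∑ l,
        (2 / ((Fintype.card N : ℂ) - Complex.I * (lam : ℂ) / (k : ℂ)) -
          if l = j then 1 else 0) * b l) := by
  have hk' : (k : ℂ) ≠ 0 := Complex.ofReal_ne_zero.mpr hk
  set d : ℂ := (Fintype.card N : ℂ) with hdd
  set c : ℂ := d - Complex.I * (lam : ℂ) / (k : ℂ) with hcc
  have hcard : (Fintype.card N : ℝ) ≠ 0 := by
    exact_mod_cast Fintype.card_ne_zero
  have hc' : (k : ℂ) * d - Complex.I * (lam : ℂ) ≠ 0 := by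
    intro h0
    have h1 := congrArg Complex.re h0
    simp [hdd, Complex.mul_re] at h1
    exact hk h1
  have hck : c * (k : ℂ) = d * (k : ℂ) - Complex.I * (lam : ℂ) := by
    rw [hcc]
    field_simp
  have hc : c ≠ 0 := by
    intro h0
    rw [h0, zero_mul] at hck
    exact hc' (by linear_combination - hck)
  set S : ℂ := ∑ l, b l with hS
  have key : ∀ j, (∑ l, (2 / c - if l = j then 1 else 0) * b l)
      = 2 / c * S - b j := by
    intro j
    simp [sub_mul, Finset.sum_sub_distrib, ← Finset.mul_sum, ite_mul,
      Finset.sum_ite_eq', hS]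
  constructor
  · rintro ⟨φ, h1, h2⟩ j
    have hsum : (∑ l, (a l - b l)) = d * φ - 2 * S := by
      have hl : ∀ l, a l - b l = φ - 2 * b l := fun l => by
        have := h1 l; linear_combination this
      rw [Finset.sum_congr rfl fun l _ => hl l]
      simp [Finset.sum_sub_distrib, ← Finset.mul_sum, hS, hdd, mul_comm]
      rw [← Finset.sum_mul]
    rw [hsum] at h2
    rw [key j]
    have haj : a j = φ - b j := by linear_combination h1 j
    rw [haj]
    have hφc : φ * c = 2 * S := by
      apply mul_right_cancel₀ hk'
      linear_combination φ * hck + Complex.I * h2 + (φ * d * (k:ℂ) - 2 * (k:ℂ) * S) * Complex.I_sq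
    have hφ : φ = 2 / c * S := by
      rw [div_mul_eq_mul_div, eq_div_iff hc]
      exact hφc
    rw [hφ]
  · intro h
    refine ⟨2 / c * S, fun j => by rw [h j, key j]; ring, ?_⟩
    have hsum : (∑ l, (a l - b l)) = d * (2 / c * S) - 2 * S := by
      have hl : ∀ l, a l - b l = 2 / c * S - 2 * b l := fun l => by
        rw [h l, key l]; ring
      rw [Finset.sum_congr rfl fun l _ => hl l]
      simp [Finset.sum_sub_distrib, ← Finset.mul_sum, hS, hdd, mul_comm]
      rw [← Finset.sum_mul]
    rw [hsum]
    have hcs : c * (2 / c * S) = 2 * S := by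
      field_simp
    linear_combination (-Complex.I * (k : ℂ)) * hcs + (Complex.I * (2 / c * S)) * hck + (-2 * (lam:ℂ) * S / c) * Complex.I_sq
end
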